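/- arXiv:0708.0074 — 2 statements merged into one kernel-verified Lean document; each statement's English description precedes it below -/
import Mathlib

section
/- For any parameters (α_0,...,α_4) summing to 1, the Bäcklund transformation s_0 maps a solution (f_0,...,f_4) of A4(α_0,α_1,α_2,α_3,α_4) with f_0 not identically zero to a solution (f_0, f_1+α_0/f_0, f_2, f_3, f_4-α_0/f_0) of A4(-α_0, α_1+α_0, α_2, α_3, α_4+α_0). -/
/-!
Write `q = α₀ / f₀`. Since `f₀' = f₀ v + α₀` with `v = f₁ - f₂ + f₃ - f₄`, the quotient satisfies the
Riccati equation `q' = -q v - q²`, and `s₀` shifts `f` by `q • (0, 1, 0, 0, -1)`. Substituting, every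
component of the new equation differs from the old one by a multiple of `q f₀ - α₀ = 0`, and the
shift does not change `∑ fᵢ`.
-/

theorem HasDerivAt.const_div_of_eq_mul_add {𝕜 : Type*} [NontriviallyNormedField 𝕜]
    {u : 𝕜 → 𝕜} {v c t : 𝕜} (hu : HasDerivAt u (u t * v + c) t) (h0 : u t ≠ 0) :
    HasDerivAt (fun s => c / u s) (-(c / u t) * v - (c / u t) ^ 2) t := by
  refine ((hasDerivAt_const t c).div hu h0).congr_deriv ?_
  field_simp
  ring

namespace A4

variable {K : Type*} [Field K]

def rhs (α x : Fin 5 → K) (i : Fin 5) : K :=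
  x i * (x (i + 1) - x (i + 2) + x (i + 3) - x (i + 4)) + α i

/-- `s₀` acts on the parameters by `αⱼ ↦ αⱼ - a₀ⱼ α₀`, `a` the Cartan matrix of `A₄⁽¹⁾`. -/
def s0Param (α : Fin 5 → K) : Fin 5 → K :=
  ![-α 0, α 1 + α 0, α 2, α 3, α 4 + α 0]

/-- `s₀` moves `f` by `(α₀ / f₀) • s0Shift`. -/
def s0Shift : Fin 5 → K :=
  ![0, 1, 0, 0, -1]

theorem sum_s0Shift : ∑ i, (s0Shift : Fin 5 → K) i = 0 := by
  simp [s0Shift, Fin.sum_univ_five]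

theorem rhs_s0Param_add_smul_s0Shift (α x : Fin 5 → K) {q : K} (hq : q * x 0 = α 0)
    (i : Fin 5) :
    rhs (s0Param α) (x + q • s0Shift) i =
      rhs α x i + (-q * (x 1 - x 2 + x 3 - x 4) - q ^ 2) * s0Shift i := by
  fin_cases i <;>
    simp only [rhs, s0Param, s0Shift, Matrix.smul_cons, smul_eq_mul, Matrix.smul_empty, Fin.isValue,
      Fin.reduceFinMk, Fin.zero_eta, Fin.mk_one, Pi.add_apply, Fin.reduceAdd, Matrix.cons_val,
      Matrix.cons_val_zero, Matrix.cons_val_one]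
  · linear_combination 2 * hq
  · linear_combination -hq
  · ring
  · ring
  · linear_combination -hq

end A4

open A4 in
theorem stmt_5_general (α : Fin 5 → ℂ)
    (U : Set ℂ)
    (f : Fin 5 → ℂ → ℂ)
    (hf0 : ∀ t ∈ U, f 0 t ≠ 0)
    (hder : ∀ i : Fin 5, ∀ t ∈ U,
      HasDerivAt (f i)
        (f i t * (f (i + 1) t - f (i + 2) t + f (i + 3) t - f (i + 4) t) + α i) t)
    (hsum : ∀ t ∈ U, ∑ i : Fin 5, f i t = t) :
    let g : Fin 5 → ℂ → ℂ :=
      ![f 0, fun t => f 1 t + α 0 / f 0 t, f 2, f 3, fun t => f 4 t - α 0 / f 0 t]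
    let β : Fin 5 → ℂ := ![-α 0, α 1 + α 0, α 2, α 3, α 4 + α 0]
    (∀ i : Fin 5, ∀ t ∈ U,
      HasDerivAt (g i)
        (g i t * (g (i + 1) t - g (i + 2) t + g (i + 3) t - g (i + 4) t) + β i) t) ∧
    (∀ t ∈ U, ∑ i : Fin 5, g i t = t) := by
  intro g β
  have hg : ∀ i, g i = fun t => f i t + α 0 / f 0 t * s0Shift i := by
    intro i
    fin_cases i <;> funext t <;> simp [g, s0Shift, sub_eq_add_neg]
  refine ⟨fun i t ht => ?_, fun t ht => ?_⟩
  · have h0 := hder 0 t ht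
    simp only [zero_add] at h0
    have hq := h0.const_div_of_eq_mul_add (hf0 t ht)
    have hgt : (fun j => g j t) = (fun j => f j t) + (α 0 / f 0 t) • s0Shift := by
      funext j
      simp [hg, mul_comm]
    have hgi : HasDerivAt (fun t => f i t + α 0 / f 0 t * s0Shift i) _ t :=
      (hder i t ht).add (hq.mul_const (s0Shift i))
    rw [← hg i] at hgi
    refine hgi.congr_deriv ?_
    change _ = rhs (s0Param α) (fun j => g j t) i
    rw [hgt, rhs_s0Param_add_smul_s0Shift _ _ (div_mul_cancel₀ _ (hf0 t ht))]
    rfl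
  · simp only [hg, Finset.sum_add_distrib, ← Finset.mul_sum, sum_s0Shift, mul_zero, add_zero]
    exact hsum t ht

/-- The Bäcklund transformation `s₀` of the `A₄⁽¹⁾` Painlevé equation: it maps a solution
`(f₀,…,f₄)` of `A₄(α₀,…,α₄)` with `f₀` nonvanishing (on a domain `U`) to the solution
`(f₀, f₁+α₀/f₀, f₂, f₃, f₄-α₀/f₀)` of `A₄(-α₀, α₁+α₀, α₂, α₃, α₄+α₀)`. -/
theorem stmt_5 (α : Fin 5 → ℂ) (hα : ∑ i : Fin 5, α i = 1)
    (U : Set ℂ) (hU : IsOpen U)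
    (f : Fin 5 → ℂ → ℂ)
    (hf0 : ∀ t ∈ U, f 0 t ≠ 0)
    (hder : ∀ i : Fin 5, ∀ t ∈ U,
      HasDerivAt (f i)
        (f i t * (f (i + 1) t - f (i + 2) t + f (i + 3) t - f (i + 4) t) + α i) t)
    (hsum : ∀ t ∈ U, ∑ i : Fin 5, f i t = t) :
    let g : Fin 5 → ℂ → ℂ :=
      ![f 0, fun t => f 1 t + α 0 / f 0 t, f 2, f 3, fun t => f 4 t - α 0 / f 0 t]
    let β : Fin 5 → ℂ := ![-α 0, α 1 + α 0, α 2, α 3, α 4 + α 0]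
    (∀ i : Fin 5, ∀ t ∈ U,
      HasDerivAt (g i)
        (g i t * (g (i + 1) t - g (i + 2) t + g (i + 3) t - g (i + 4) t) + β i) t) ∧
    (∀ t ∈ U, ∑ i : Fin 5, g i t = t) :=
  stmt_5_general α U f hf0 hder hsum
end

section
/- Define H-hat := f_0 f_1 f_2 + f_1 f_2 f_3 + f_2 f_3 f_4 + f_3 f_4 f_0 + f_4 f_0 f_1. If, near t = c, f_i = (t-c)^{-1} + O(1), f_{i+1} = -(t-c)^{-1} + O(1), f_{i+2} = O(t-c), f_{i+3} = O(t-c), f_{i+4} = O(t-c), with the Laurent coefficients as in the Painlevé expansion (in particular leading linear coefficients -α_{i+2}, α_{i+3}/3, -α_{i+4} for f_{i+2}, f_{i+3}, f_{i+4} and constant terms c/2 for f_i, f_{i+1}), then the residue of H-hat at t = c equals α_{i+2} + α_{i+4}. -/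
/-!
Vanishing of coefficients below given orders is additive under multiplication, and the
coefficient at the sum of those orders is the product of the corresponding coefficients.
Hence `g₀g₁g₂` and `g₄g₀g₁` have order at least `-1` with residues `1·(-1)·(-α₂) = α₂` and
`(-α₄)·1·(-1) = α₄`, while the other three terms have order at least `1`.
-/

namespace HahnSeries

variable {Γ R : Type*} [AddCommMonoid Γ] [LinearOrder Γ] [IsOrderedCancelAddMonoid Γ]
  [NonUnitalNonAssocSemiring R] {x y z : R⟦Γ⟧} {a b c : Γ}

theorem coeff_mul_add_of_le_orderTop (ha : ↑a ≤ x.orderTop) (hb : ↑b ≤ y.orderTop) :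
    (x * y).coeff (a + b) = x.coeff a * y.coeff b := by
  rw [coeff_mul, Finset.sum_eq_single (a, b)]
  · rintro ⟨i, j⟩ hij hne
    have hsum : i + j = a + b := (Finset.mem_antidiagonal.mp hij).2.2
    rcases lt_or_ge i a with hi | hi
    · rw [coeff_eq_zero_of_lt_orderTop ((WithTop.coe_lt_coe.mpr hi).trans_le ha), zero_mul]
    rcases lt_or_ge j b with hj | hj
    · rw [coeff_eq_zero_of_lt_orderTop (x := y) ((WithTop.coe_lt_coe.mpr hj).trans_le hb),
        mul_zero]
    -- `i ≥ a`, `j ≥ b` and `i + j = a + b` force `(i, j) = (a, b)`.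
    refine absurd (Prod.ext (hi.antisymm' ?_) (hj.antisymm' ?_)) hne
    · exact le_of_add_le_add_right (hsum.le.trans (add_le_add_right hj a))
    · exact le_of_add_le_add_left (hsum.le.trans (add_le_add_left hi b))
  · intro hab
    by_contra hne
    exact hab (Finset.mem_antidiagonal.mpr
      ⟨left_ne_zero_of_mul hne, right_ne_zero_of_mul hne, rfl⟩)

theorem le_orderTop_mul (ha : ↑a ≤ x.orderTop) (hb : ↑b ≤ y.orderTop) :
    ↑(a + b) ≤ (x * y).orderTop :=
  (WithTop.coe_add a b ▸ add_le_add ha hb).trans orderTop_add_le_mul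

theorem coeff_mul_mul_add_add_of_le_orderTop (ha : ↑a ≤ x.orderTop) (hb : ↑b ≤ y.orderTop)
    (hc : ↑c ≤ z.orderTop) :
    (x * y * z).coeff (a + b + c) = x.coeff a * y.coeff b * z.coeff c := by
  rw [coeff_mul_add_of_le_orderTop (le_orderTop_mul ha hb) hc, coeff_mul_add_of_le_orderTop ha hb]

theorem coeff_mul_mul_eq_zero_of_lt (ha : ↑a ≤ x.orderTop) (hb : ↑b ≤ y.orderTop)
    (hc : ↑c ≤ z.orderTop) {n : Γ} (hn : n < a + b + c) : (x * y * z).coeff n = 0 :=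
  coeff_eq_zero_of_lt_orderTop
    ((WithTop.coe_lt_coe.mpr hn).trans_le (le_orderTop_mul (le_orderTop_mul ha hb) hc))

end HahnSeries

open HahnSeries in
theorem stmt_11_general (a2 a4 : ℂ) (g0 g1 g2 g3 g4 : LaurentSeries ℂ)
    (h0lt : ∀ n : ℤ, n < -1 → g0.coeff n = 0) (h0m1 : g0.coeff (-1) = 1)
    (h1lt : ∀ n : ℤ, n < -1 → g1.coeff n = 0) (h1m1 : g1.coeff (-1) = -1)
    (h2lt : ∀ n : ℤ, n < 1 → g2.coeff n = 0) (h21 : g2.coeff 1 = -a2)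
    (h3lt : ∀ n : ℤ, n < 1 → g3.coeff n = 0)
    (h4lt : ∀ n : ℤ, n < 1 → g4.coeff n = 0) (h41 : g4.coeff 1 = -a4) :
    (g0 * g1 * g2 + g1 * g2 * g3 + g2 * g3 * g4 + g3 * g4 * g0 + g4 * g0 * g1).coeff (-1)
      = a2 + a4 := by
  have ord (g : LaurentSeries ℂ) (a : ℤ) (h : ∀ n < a, g.coeff n = 0) : ↑a ≤ g.orderTop :=
    le_orderTop_iff_forall.mpr fun j hj ↦ h j (WithTop.coe_lt_coe.mp hj)
  have o0 := ord g0 _ h0lt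
  have o1 := ord g1 _ h1lt
  have o2 := ord g2 _ h2lt
  have o3 := ord g3 _ h3lt
  have o4 := ord g4 _ h4lt
  have t012 : (g0 * g1 * g2).coeff (-1) = a2 := by
    simpa [h0m1, h1m1, h21] using coeff_mul_mul_add_add_of_le_orderTop o0 o1 o2
  have t401 : (g4 * g0 * g1).coeff (-1) = a4 := by
    simpa [h0m1, h1m1, h41] using coeff_mul_mul_add_add_of_le_orderTop o4 o0 o1
  have t123 := coeff_mul_mul_eq_zero_of_lt o1 o2 o3 (n := -1) (by norm_num)
  have t234 := coeff_mul_mul_eq_zero_of_lt o2 o3 o4 (n := -1) (by norm_num)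
  have t340 := coeff_mul_mul_eq_zero_of_lt o3 o4 o0 (n := -1) (by norm_num)
  simp only [coeff_add, t012, t123, t234, t340, t401, add_zero]

/-- Residue of the principal Hamiltonian `Ĥ = f₀f₁f₂ + f₁f₂f₃ + f₂f₃f₄ + f₃f₄f₀ + f₄f₀f₁`
at a simple pole `t = c` of type (1): here `g₀,…,g₄` are the Laurent expansions (in the
local variable `t - c`) of `f_i, f_{i+1}, f_{i+2}, f_{i+3}, f_{i+4}`, with
`g₀ = (t-c)⁻¹ + c/2 + ⋯`, `g₁ = -(t-c)⁻¹ + c/2 + ⋯`, `g₂ = -α_{i+2}(t-c) + ⋯`,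
`g₃ = (α_{i+3}/3)(t-c) + ⋯`, `g₄ = -α_{i+4}(t-c) + ⋯`.  The residue (the coefficient of
`(t-c)⁻¹`) of `Ĥ` equals `α_{i+2} + α_{i+4}`. -/
theorem stmt_11 (c a2 a3 a4 : ℂ) (g0 g1 g2 g3 g4 : LaurentSeries ℂ)
    (h0lt : ∀ n : ℤ, n < -1 → g0.coeff n = 0) (h0m1 : g0.coeff (-1) = 1)
    (h00 : g0.coeff 0 = c / 2)
    (h1lt : ∀ n : ℤ, n < -1 → g1.coeff n = 0) (h1m1 : g1.coeff (-1) = -1)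
    (h10 : g1.coeff 0 = c / 2)
    (h2lt : ∀ n : ℤ, n < 1 → g2.coeff n = 0) (h21 : g2.coeff 1 = -a2)
    (h3lt : ∀ n : ℤ, n < 1 → g3.coeff n = 0) (h31 : g3.coeff 1 = a3 / 3)
    (h4lt : ∀ n : ℤ, n < 1 → g4.coeff n = 0) (h41 : g4.coeff 1 = -a4) :
    (g0 * g1 * g2 + g1 * g2 * g3 + g2 * g3 * g4 + g3 * g4 * g0 + g4 * g0 * g1).coeff (-1)
      = a2 + a4 :=
  stmt_11_general a2 a4 g0 g1 g2 g3 g4 h0lt h0m1 h1lt h1m1 h2lt h21 h3lt h4lt h41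
end
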